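/- arXiv:1606.01800 — 2 statements merged into one kernel-verified Lean document; each statement's English description precedes it below -/
import Mathlib

section
/- Let c ≠ 0 and 0 < ε < 1. If a real random variable X_n satisfies P(|X_n - c| ≥ ε') ≤ exp(-κn(ε')²) for all ε' > 0, then P(|X_n⁻¹ - c⁻¹| ≥ ε) ≤ 2·exp(-nκε²c²·min(c²,1)/4). -/
open MeasureTheory

theorem inverse_concentration
    {Ω : Type*} [MeasureSpace Ω] (μ : Measure Ω) [IsProbabilityMeasure μ]
    (X : Ω → ℝ) (c : ℝ) (hc : c ≠ 0) (κ n : ℝ) (hκ : 0 < κ) (hn : 0 < n)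
    (h : ∀ ε' : ℝ, 0 < ε' →
      μ {ω | ε' ≤ |X ω - c|} ≤ ENNReal.ofReal (Real.exp (-(κ * n * ε' ^ 2))))
    (ε : ℝ) (hε0 : 0 < ε) (hε1 : ε < 1) :
    μ {ω | ε ≤ |(X ω)⁻¹ - c⁻¹|} ≤
      ENNReal.ofReal (2 * Real.exp (-(n * κ * ε ^ 2 * c ^ 2 * min (c ^ 2) 1 / 4))) := by
  have hcabs : 0 < |c| := abs_pos.mpr hc
  have hc2 : 0 < c ^ 2 := by positivity
  set δ1 : ℝ := |c| / 2 with hδ1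
  set δ2 : ℝ := ε * c ^ 2 / 2 with hδ2
  have hδ1pos : 0 < δ1 := by positivity
  have hδ2pos : 0 < δ2 := by positivity
  have hcc : |c| * |c| = c ^ 2 := by rw [← sq, sq_abs]
  have hsub : {ω | ε ≤ |(X ω)⁻¹ - c⁻¹|} ⊆
      {ω | δ1 ≤ |X ω - c|} ∪ {ω | δ2 ≤ |X ω - c|} := by
    intro ω hω
    by_contra hcon
    simp only [Set.mem_union, Set.mem_setOf_eq, not_or, not_le] at hcon
    obtain ⟨h1, h2⟩ := hcon
    have hX : |c| / 2 < |X ω| := by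
      have h3 : |c| - |X ω| ≤ |c - X ω| := abs_sub_abs_le_abs_sub c (X ω)
      rw [abs_sub_comm] at h3
      linarith
    have hXne : X ω ≠ 0 := by
      intro h0
      rw [h0, abs_zero] at hX
      linarith
    have key : |(X ω)⁻¹ - c⁻¹| = |X ω - c| / (|X ω| * |c|) := by
      rw [inv_sub_inv hXne hc, abs_div, abs_mul, abs_sub_comm]
    have hlt : |(X ω)⁻¹ - c⁻¹| < ε := by
      rw [key, div_lt_iff₀ (by positivity)]
      have hstep : ε * (|c| / 2 * |c|) < ε * (|X ω| * |c|) := by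
        apply mul_lt_mul_of_pos_left _ hε0
        exact mul_lt_mul_of_pos_right hX hcabs
      have h2' : |X ω - c| < ε * (|c| / 2 * |c|) := by
        have : ε * (|c| / 2 * |c|) = ε * c ^ 2 / 2 := by rw [← hcc]; ring
        rw [this]; exact h2
      linarith
    have hω' : ε ≤ |(X ω)⁻¹ - c⁻¹| := hω
    linarith
  have hsum : Real.exp (-(κ * n * δ1 ^ 2)) + Real.exp (-(κ * n * δ2 ^ 2)) ≤
      2 * Real.exp (-(n * κ * ε ^ 2 * c ^ 2 * min (c ^ 2) 1 / 4)) := by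
    have hmin1 : min (c ^ 2) 1 ≤ 1 := min_le_right _ _
    have hmin2 : min (c ^ 2) 1 ≤ c ^ 2 := min_le_left _ _
    have hminpos : 0 < min (c ^ 2) 1 := lt_min hc2 one_pos
    have e1 : Real.exp (-(κ * n * δ1 ^ 2)) ≤
        Real.exp (-(n * κ * ε ^ 2 * c ^ 2 * min (c ^ 2) 1 / 4)) := by
      apply Real.exp_le_exp.mpr
      have hδ1sq : δ1 ^ 2 = c ^ 2 / 4 := by
        rw [hδ1]; rw [div_pow, sq_abs]; norm_num
      rw [hδ1sq]
      have hεm : ε ^ 2 * min (c ^ 2) 1 ≤ 1 := by nlinarith [sq_nonneg ε]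
      have hP : (0:ℝ) ≤ n * κ * c ^ 2 := by positivity
      have := mul_le_mul_of_nonneg_left hεm hP
      nlinarith
    have e2 : Real.exp (-(κ * n * δ2 ^ 2)) ≤
        Real.exp (-(n * κ * ε ^ 2 * c ^ 2 * min (c ^ 2) 1 / 4)) := by
      apply Real.exp_le_exp.mpr
      have hδ2sq : δ2 ^ 2 = ε ^ 2 * c ^ 4 / 4 := by rw [hδ2]; ring
      rw [hδ2sq]
      have hQ : (0:ℝ) ≤ n * κ * ε ^ 2 * c ^ 2 := by positivity
      have := mul_le_mul_of_nonneg_left hmin2 hQ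
      nlinarith
    linarith
  calc μ {ω | ε ≤ |(X ω)⁻¹ - c⁻¹|}
      ≤ μ ({ω | δ1 ≤ |X ω - c|} ∪ {ω | δ2 ≤ |X ω - c|}) := measure_mono hsub
    _ ≤ μ {ω | δ1 ≤ |X ω - c|} + μ {ω | δ2 ≤ |X ω - c|} := measure_union_le _ _
    _ ≤ ENNReal.ofReal (Real.exp (-(κ * n * δ1 ^ 2))) +
        ENNReal.ofReal (Real.exp (-(κ * n * δ2 ^ 2))) :=
        add_le_add (h δ1 hδ1pos) (h δ2 hδ2pos)
    _ = ENNReal.ofReal (Real.exp (-(κ * n * δ1 ^ 2)) + Real.exp (-(κ * n * δ2 ^ 2))) :=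
        (ENNReal.ofReal_add (Real.exp_pos _).le (Real.exp_pos _).le).symm
    _ ≤ ENNReal.ofReal (2 * Real.exp (-(n * κ * ε ^ 2 * c ^ 2 * min (c ^ 2) 1 / 4))) :=
        ENNReal.ofReal_le_ofReal hsum
end

section
/- Let φ: ℝ^{t+2} → ℝ be pseudo-Lipschitz of order 2, let c₁,...,c_{t+1} be real constants, and let Z ~ N(0,1). Then the function φ̃: ℝ^{t+1} → ℝ defined by φ̃(v₁,...,v_t, w) = E_Z[φ(v₁,...,v_t, ∑_{r=1}^t c_r v_r + c_{t+1} Z, w)] is also pseudo-Lipschitz of order 2. -/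
open MeasureTheory ProbabilityTheory

section AuxPL

lemma gaussian_integrable_aux (f : ℝ → ℝ)
    (hint : Integrable (fun x => f x * Real.exp (-(1/2) * x ^ 2))) :
    Integrable f (gaussianReal 0 1) := by
  rw [gaussianReal_of_var_ne_zero 0 one_ne_zero,
    integrable_withDensity_iff (measurable_gaussianPDF 0 1)
      (Filter.Eventually.of_forall fun _ => ENNReal.ofReal_lt_top)]
  have h : (fun x => f x * (gaussianPDF 0 1 x).toReal)
      = fun x => (Real.sqrt (2 * Real.pi))⁻¹ * (f x * Real.exp (-(1/2) * x ^ 2)) := by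
    funext x
    rw [gaussianPDF, ENNReal.toReal_ofReal (gaussianPDFReal_nonneg _ _ _)]
    simp only [gaussianPDFReal, NNReal.coe_one, mul_one, sub_zero]
    ring_nf
  rw [h]
  exact hint.const_mul _

lemma gaussian_integrable_abs : Integrable (fun z : ℝ => |z|) (gaussianReal 0 1) := by
  apply gaussian_integrable_aux
  have h := (integrable_mul_exp_neg_mul_sq (by norm_num : (0:ℝ) < 1/2)).abs
  exact h.congr (Filter.Eventually.of_forall fun x => by
    simp only [abs_mul, abs_of_nonneg (Real.exp_pos _).le])

lemma gaussian_integrable_sq : Integrable (fun z : ℝ => z ^ 2) (gaussianReal 0 1) := by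
  apply gaussian_integrable_aux
  have h := integrable_rpow_mul_exp_neg_mul_sq (by norm_num : (0:ℝ) < 1/2)
    (s := 2) (by norm_num)
  exact h.congr (Filter.Eventually.of_forall fun x => by
    norm_num [Real.rpow_natCast])

lemma euclid_sq_norm {n : ℕ} (x : EuclideanSpace ℝ (Fin n)) :
    ‖x‖ ^ 2 = ∑ i, x i ^ 2 := by
  rw [EuclideanSpace.norm_eq, Real.sq_sqrt (by positivity)]
  simp [Real.norm_eq_abs, sq_abs]

lemma euclid_coord_le {n : ℕ} (x : EuclideanSpace ℝ (Fin n)) (i : Fin n) :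
    |x i| ≤ ‖x‖ := by
  rw [← Real.sqrt_sq_eq_abs, EuclideanSpace.norm_eq]
  apply Real.sqrt_le_sqrt
  have := Finset.single_le_sum (f := fun j => ‖x j‖ ^ 2)
    (fun j _ => by positivity) (Finset.mem_univ i)
  simpa [Real.norm_eq_abs, sq_abs] using this

lemma euclid_norm_le_of_sq_le {n : ℕ} {x : EuclideanSpace ℝ (Fin n)} {p : ℝ}
    (hp : 0 ≤ p) (h : ‖x‖ ^ 2 ≤ p ^ 2) : ‖x‖ ≤ p := by
  nlinarith [norm_nonneg x]

/-- The affine map appearing in the theorem. -/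
noncomputable def Tmap (t : ℕ) (c : Fin (t + 1) → ℝ)
    (u : EuclideanSpace ℝ (Fin (t + 1))) (z : ℝ) :
    EuclideanSpace ℝ (Fin (t + 2)) :=
  WithLp.toLp 2 (Fin.snoc (Fin.snoc (fun i : Fin t => u i.castSucc)
    (∑ r : Fin t, c r.castSucc * u r.castSucc + c (Fin.last t) * z))
    (u (Fin.last t)) : Fin (t + 2) → ℝ)

variable {t : ℕ} {c : Fin (t + 1) → ℝ}

lemma Tmap_sq (u : EuclideanSpace ℝ (Fin (t + 1))) (z : ℝ) :
    ‖Tmap t c u z‖ ^ 2 = ‖u‖ ^ 2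
      + ((∑ r : Fin t, c r.castSucc * u r.castSucc) + c (Fin.last t) * z) ^ 2 := by
  have hl : ∑ i, (Tmap t c u z) i ^ 2
      = ((∑ i : Fin t, u i.castSucc ^ 2)
          + ((∑ r : Fin t, c r.castSucc * u r.castSucc) + c (Fin.last t) * z) ^ 2)
        + u (Fin.last t) ^ 2 := by
    rw [Fin.sum_univ_castSucc, Fin.sum_univ_castSucc]
    simp [Tmap]
  have hr : ∑ i, u i ^ 2 = (∑ i : Fin t, u i.castSucc ^ 2) + u (Fin.last t) ^ 2 := by
    rw [Fin.sum_univ_castSucc]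
  rw [euclid_sq_norm, euclid_sq_norm, hl, hr]; ring

lemma Tmap_sub_sq (u u' : EuclideanSpace ℝ (Fin (t + 1))) (z : ℝ) :
    ‖Tmap t c u z - Tmap t c u' z‖ ^ 2 = ‖u - u'‖ ^ 2
      + (∑ r : Fin t, c r.castSucc * (u r.castSucc - u' r.castSucc)) ^ 2 := by
  have hmid : ((∑ r : Fin t, c r.castSucc * u r.castSucc) + c (Fin.last t) * z)
      - ((∑ r : Fin t, c r.castSucc * u' r.castSucc) + c (Fin.last t) * z)
      = ∑ r : Fin t, c r.castSucc * (u r.castSucc - u' r.castSucc) := by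
    have e : ∑ r : Fin t, c r.castSucc * (u r.castSucc - u' r.castSucc)
        = (∑ r : Fin t, c r.castSucc * u r.castSucc)
          - ∑ r : Fin t, c r.castSucc * u' r.castSucc := by
      rw [← Finset.sum_sub_distrib]
      exact Finset.sum_congr rfl fun r _ => by ring
    rw [e]; ring
  have hl : ∑ i, (Tmap t c u z - Tmap t c u' z) i ^ 2
      = ((∑ i : Fin t, (u i.castSucc - u' i.castSucc) ^ 2)
          + (∑ r : Fin t, c r.castSucc * (u r.castSucc - u' r.castSucc)) ^ 2)
        + (u (Fin.last t) - u' (Fin.last t)) ^ 2 := by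
    rw [Fin.sum_univ_castSucc, Fin.sum_univ_castSucc]
    simp only [PiLp.sub_apply, Tmap, PiLp.toLp_apply, Fin.snoc_castSucc, Fin.snoc_last, hmid]
  have hr : ∑ i, (u - u') i ^ 2
      = (∑ i : Fin t, (u i.castSucc - u' i.castSucc) ^ 2)
        + (u (Fin.last t) - u' (Fin.last t)) ^ 2 := by
    rw [Fin.sum_univ_castSucc]
    simp [PiLp.sub_apply]
  rw [euclid_sq_norm, euclid_sq_norm, hl, hr]; ring

lemma sum_mul_abs_le (u : EuclideanSpace ℝ (Fin (t + 1))) :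
    |∑ r : Fin t, c r.castSucc * u r.castSucc|
      ≤ (∑ r : Fin t, |c r.castSucc|) * ‖u‖ := by
  calc |∑ r : Fin t, c r.castSucc * u r.castSucc|
      ≤ ∑ r : Fin t, |c r.castSucc * u r.castSucc| := Finset.abs_sum_le_sum_abs _ _
    _ ≤ ∑ r : Fin t, |c r.castSucc| * ‖u‖ := by
        refine Finset.sum_le_sum fun r _ => ?_
        rw [abs_mul]
        exact mul_le_mul_of_nonneg_left (euclid_coord_le u _) (abs_nonneg _)
    _ = (∑ r : Fin t, |c r.castSucc|) * ‖u‖ := by rw [Finset.sum_mul]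

lemma Tmap_norm_le (u : EuclideanSpace ℝ (Fin (t + 1))) (z : ℝ) :
    ‖Tmap t c u z‖ ≤ (1 + ∑ r : Fin t, |c r.castSucc|) * ‖u‖
      + |c (Fin.last t)| * |z| := by
  set K : ℝ := ∑ r : Fin t, |c r.castSucc| with hK
  have hK0 : 0 ≤ K := Finset.sum_nonneg fun _ _ => abs_nonneg _
  have h1 : |(∑ r : Fin t, c r.castSucc * u r.castSucc) + c (Fin.last t) * z|
      ≤ K * ‖u‖ + |c (Fin.last t)| * |z| := by
    calc _ ≤ |∑ r : Fin t, c r.castSucc * u r.castSucc| + |c (Fin.last t) * z| :=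
          abs_add_le _ _
      _ ≤ K * ‖u‖ + |c (Fin.last t)| * |z| := by
          rw [abs_mul]
          exact add_le_add (sum_mul_abs_le u) le_rfl
  refine euclid_norm_le_of_sq_le (by positivity) ?_
  rw [Tmap_sq]
  have h2 : ((∑ r : Fin t, c r.castSucc * u r.castSucc) + c (Fin.last t) * z) ^ 2
      ≤ (K * ‖u‖ + |c (Fin.last t)| * |z|) ^ 2 := by
    rw [← sq_abs]
    apply sq_le_sq' _ h1
    nlinarith [abs_nonneg ((∑ r : Fin t, c r.castSucc * u r.castSucc) + c (Fin.last t) * z)]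
  nlinarith [h2, mul_nonneg (norm_nonneg u) (mul_nonneg (abs_nonneg (c (Fin.last t))) (abs_nonneg z)),
    mul_nonneg hK0 (mul_nonneg (norm_nonneg u) (norm_nonneg u))]

lemma Tmap_sub_norm_le (u u' : EuclideanSpace ℝ (Fin (t + 1))) (z : ℝ) :
    ‖Tmap t c u z - Tmap t c u' z‖
      ≤ (1 + ∑ r : Fin t, |c r.castSucc|) * ‖u - u'‖ := by
  set K : ℝ := ∑ r : Fin t, |c r.castSucc| with hK
  have hK0 : 0 ≤ K := Finset.sum_nonneg fun _ _ => abs_nonneg _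
  have h1 : |∑ r : Fin t, c r.castSucc * (u r.castSucc - u' r.castSucc)|
      ≤ K * ‖u - u'‖ := by
    have := sum_mul_abs_le (c := c) (u - u')
    simpa [PiLp.sub_apply] using this
  refine euclid_norm_le_of_sq_le (by positivity) ?_
  rw [Tmap_sub_sq]
  have h2 : (∑ r : Fin t, c r.castSucc * (u r.castSucc - u' r.castSucc)) ^ 2
      ≤ (K * ‖u - u'‖) ^ 2 := by
    rw [← sq_abs]
    apply sq_le_sq' _ h1
    nlinarith [abs_nonneg (∑ r : Fin t, c r.castSucc * (u r.castSucc - u' r.castSucc))]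
  nlinarith [norm_nonneg (u - u'), mul_nonneg hK0 (norm_nonneg (u - u'))]

lemma Tmap_continuous (u : EuclideanSpace ℝ (Fin (t + 1))) :
    Continuous (Tmap t c u) := by
  have h : Tmap t c u
      = fun z : ℝ => Tmap t c u 0 + z • Tmap t c (0 : EuclideanSpace ℝ (Fin (t + 1))) 1 := by
    funext z; ext i
    simp only [PiLp.add_apply, PiLp.smul_apply, smul_eq_mul]
    induction i using Fin.lastCases with
    | last => simp [Tmap]
    | cast j =>
      induction j using Fin.lastCases with
      | last =>
        simp only [Tmap, PiLp.toLp_apply, Fin.snoc_castSucc, Fin.snoc_last]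
        norm_num
        ring
      | cast i => simp [Tmap]
  rw [h]
  exact continuous_const.add (continuous_id.smul continuous_const)

lemma pseudoLipschitz_continuous {m : ℕ} (φ : EuclideanSpace ℝ (Fin m) → ℝ) (L : ℝ)
    (hφ : ∀ x y : EuclideanSpace ℝ (Fin m),
      |φ x - φ y| ≤ L * (1 + ‖x‖ + ‖y‖) * ‖x - y‖) :
    Continuous φ := by
  rw [continuous_iff_continuousAt]
  intro x₀
  have h0 : Filter.Tendsto (fun x => φ x - φ x₀) (nhds x₀) (nhds 0) := by
    apply squeeze_zero_norm (a := fun x => L * (1 + ‖x‖ + ‖x₀‖) * ‖x - x₀‖)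
    · intro x; simpa [Real.norm_eq_abs] using hφ x x₀
    · have hc : Continuous fun x : EuclideanSpace ℝ (Fin m) =>
          L * (1 + ‖x‖ + ‖x₀‖) * ‖x - x₀‖ := by fun_prop
      simpa using hc.tendsto x₀
  have := h0.add (tendsto_const_nhds (x := φ x₀))
  simpa [ContinuousAt] using this

lemma Tmap_integrable (φ : EuclideanSpace ℝ (Fin (t + 2)) → ℝ) (L : ℝ) (hL : 0 < L)
    (hφ : ∀ x y : EuclideanSpace ℝ (Fin (t + 2)),
      |φ x - φ y| ≤ L * (1 + ‖x‖ + ‖y‖) * ‖x - y‖)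
    (u : EuclideanSpace ℝ (Fin (t + 1))) :
    Integrable (fun z => φ (Tmap t c u z)) (gaussianReal 0 1) := by
  set K : ℝ := ∑ r : Fin t, |c r.castSucc| with hK
  have hK0 : 0 ≤ K := Finset.sum_nonneg fun _ _ => abs_nonneg _
  set R : ℝ := (1 + K) * ‖u‖ with hR
  have hR0 : 0 ≤ R := by positivity
  set B : ℝ := |c (Fin.last t)| with hB
  have hB0 : 0 ≤ B := abs_nonneg _
  have hmeas : AEStronglyMeasurable (fun z => φ (Tmap t c u z)) (gaussianReal 0 1) :=
    ((pseudoLipschitz_continuous φ L hφ).comp (Tmap_continuous u)).aestronglyMeasurable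
  refine Integrable.mono' (g := fun z =>
      (|φ 0| + L * ((1 + R) * R) + L * ((1 + 2 * R) * B) * |z|) + L * B ^ 2 * z ^ 2)
    ?_ hmeas (Filter.Eventually.of_forall fun z => ?_)
  · exact ((integrable_const _).add (gaussian_integrable_abs.const_mul _)).add
      (gaussian_integrable_sq.const_mul _)
  · have hTn : ‖Tmap t c u z‖ ≤ R + B * |z| := Tmap_norm_le u z
    have hN0 : (0:ℝ) ≤ ‖Tmap t c u z‖ := norm_nonneg _
    have hφ0 := hφ (Tmap t c u z) 0
    simp only [norm_zero, sub_zero, add_zero] at hφ0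
    have habs : |φ (Tmap t c u z)| - |φ 0| ≤ |φ (Tmap t c u z) - φ 0| :=
      abs_sub_abs_le_abs_sub _ _
    have hz0 : (0:ℝ) ≤ |z| := abs_nonneg z
    have hzsq : z ^ 2 = |z| ^ 2 := (sq_abs z).symm
    rw [Real.norm_eq_abs]
    have hM0' : (0:ℝ) ≤ R + B * |z| := by positivity
    have hkey : L * (1 + ‖Tmap t c u z‖) * ‖Tmap t c u z‖
        ≤ L * (1 + (R + B * |z|)) * (R + B * |z|) := by
      calc L * (1 + ‖Tmap t c u z‖) * ‖Tmap t c u z‖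
          = L * ((1 + ‖Tmap t c u z‖) * ‖Tmap t c u z‖) := by ring
        _ ≤ L * ((1 + (R + B * |z|)) * (R + B * |z|)) :=
            mul_le_mul_of_nonneg_left
              (mul_le_mul (by linarith) hTn hN0 (by linarith)) hL.le
        _ = L * (1 + (R + B * |z|)) * (R + B * |z|) := by ring
    have hexp : |φ 0| + L * (1 + (R + B * |z|)) * (R + B * |z|)
        = |φ 0| + L * ((1 + R) * R) + L * ((1 + 2 * R) * B) * |z| + L * B ^ 2 * z ^ 2 := by
      rw [hzsq]; ring
    linarith [habs, hφ0, hkey, hexp.le, hexp.ge]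

end AuxPL

theorem gaussian_expectation_pseudoLipschitz
    (t : ℕ) (φ : EuclideanSpace ℝ (Fin (t + 2)) → ℝ)
    (L : ℝ) (hL : 0 < L)
    (hφ : ∀ x y : EuclideanSpace ℝ (Fin (t + 2)),
      |φ x - φ y| ≤ L * (1 + ‖x‖ + ‖y‖) * ‖x - y‖)
    (c : Fin (t + 1) → ℝ) :
    ∃ L' : ℝ, 0 < L' ∧
      ∀ u u' : EuclideanSpace ℝ (Fin (t + 1)),
        |(∫ z : ℝ, φ (WithLp.toLp 2 (Fin.snoc
              (Fin.snoc (fun i : Fin t => u i.castSucc)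
                (∑ r : Fin t, c r.castSucc * u r.castSucc + c (Fin.last t) * z))
              (u (Fin.last t)) : Fin (t + 2) → ℝ) : EuclideanSpace ℝ (Fin (t + 2)))
            ∂(gaussianReal 0 1)) -
          (∫ z : ℝ, φ (WithLp.toLp 2 (Fin.snoc
              (Fin.snoc (fun i : Fin t => u' i.castSucc)
                (∑ r : Fin t, c r.castSucc * u' r.castSucc + c (Fin.last t) * z))
              (u' (Fin.last t)) : Fin (t + 2) → ℝ) : EuclideanSpace ℝ (Fin (t + 2)))
            ∂(gaussianReal 0 1))| ≤
          L' * (1 + ‖u‖ + ‖u'‖) * ‖u - u'‖ := by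
  classical
  set K : ℝ := ∑ r : Fin t, |c r.castSucc| with hK
  have hK0 : 0 ≤ K := Finset.sum_nonneg fun _ _ => abs_nonneg _
  set B : ℝ := |c (Fin.last t)| with hB
  have hB0 : 0 ≤ B := abs_nonneg _
  set M : ℝ := ∫ z, |z| ∂(gaussianReal 0 1) with hM
  have hM0 : 0 ≤ M := integral_nonneg fun _ => abs_nonneg _
  refine ⟨L * (1 + K) ^ 2 * (1 + 2 * B * M), by positivity, fun u u' => ?_⟩
  show |(∫ z : ℝ, φ (Tmap t c u z) ∂(gaussianReal 0 1))
      - ∫ z : ℝ, φ (Tmap t c u' z) ∂(gaussianReal 0 1)|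
    ≤ L * (1 + K) ^ 2 * (1 + 2 * B * M) * (1 + ‖u‖ + ‖u'‖) * ‖u - u'‖
  have hfu := Tmap_integrable (c := c) φ L hL hφ u
  have hfu' := Tmap_integrable (c := c) φ L hL hφ u'
  set P : ℝ := L * (1 + (1 + K) * (‖u‖ + ‖u'‖)) * ((1 + K) * ‖u - u'‖) with hP
  set Q : ℝ := L * (2 * B) * ((1 + K) * ‖u - u'‖) with hQ
  have key : |(∫ z : ℝ, φ (Tmap t c u z) ∂(gaussianReal 0 1))
      - ∫ z : ℝ, φ (Tmap t c u' z) ∂(gaussianReal 0 1)| ≤ P + Q * M := by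
    rw [← integral_sub hfu hfu']
    calc |∫ z : ℝ, (φ (Tmap t c u z) - φ (Tmap t c u' z)) ∂(gaussianReal 0 1)|
        ≤ ∫ z : ℝ, |φ (Tmap t c u z) - φ (Tmap t c u' z)| ∂(gaussianReal 0 1) := by
          simpa [Real.norm_eq_abs] using
            norm_integral_le_integral_norm (μ := gaussianReal 0 1)
              (fun z => φ (Tmap t c u z) - φ (Tmap t c u' z))
      _ ≤ ∫ z : ℝ, (P + Q * |z|) ∂(gaussianReal 0 1) := by
          refine integral_mono (hfu.sub hfu').abs
            ((integrable_const _).add (gaussian_integrable_abs.const_mul _)) fun z => ?_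
          have h1 := hφ (Tmap t c u z) (Tmap t c u' z)
          have h2 : ‖Tmap t c u z‖ ≤ (1 + K) * ‖u‖ + B * |z| := Tmap_norm_le u z
          have h3 : ‖Tmap t c u' z‖ ≤ (1 + K) * ‖u'‖ + B * |z| := Tmap_norm_le u' z
          have h4 : ‖Tmap t c u z - Tmap t c u' z‖ ≤ (1 + K) * ‖u - u'‖ :=
            Tmap_sub_norm_le u u' z
          have h5 : (0:ℝ) ≤ ‖Tmap t c u z - Tmap t c u' z‖ := norm_nonneg _
          have h6 : (0:ℝ) ≤ 1 + ‖Tmap t c u z‖ + ‖Tmap t c u' z‖ := by positivity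
          calc |φ (Tmap t c u z) - φ (Tmap t c u' z)|
              ≤ L * (1 + ‖Tmap t c u z‖ + ‖Tmap t c u' z‖)
                * ‖Tmap t c u z - Tmap t c u' z‖ := h1
            _ ≤ L * (1 + ((1 + K) * ‖u‖ + B * |z|) + ((1 + K) * ‖u'‖ + B * |z|))
                * ((1 + K) * ‖u - u'‖) := by
                refine mul_le_mul (mul_le_mul_of_nonneg_left (by linarith) hL.le) h4 h5 ?_
                have : (0:ℝ) ≤ B * |z| := by positivity
                have hn1 : (0:ℝ) ≤ (1 + K) * ‖u‖ := by positivity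
                have hn2 : (0:ℝ) ≤ (1 + K) * ‖u'‖ := by positivity
                nlinarith [hL.le]
            _ = P + Q * |z| := by rw [hP, hQ]; ring
      _ = P + Q * M := by
          rw [integral_add (integrable_const _) (gaussian_integrable_abs.const_mul _),
            integral_const, integral_const_mul]
          simp [hM]
  refine key.trans ?_
  rw [hP, hQ]
  have h1 : (0:ℝ) ≤ ‖u‖ + ‖u'‖ := by positivity
  have h2 : (0:ℝ) ≤ ‖u - u'‖ := norm_nonneg _
  nlinarith [mul_nonneg (mul_nonneg hB0 hM0) h1, mul_nonneg hK0 h1,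
    mul_nonneg (mul_nonneg hB0 hM0) (mul_nonneg hK0 h1),
    mul_nonneg hK0 (mul_nonneg hK0 h1),
    mul_nonneg (mul_nonneg (mul_nonneg hB0 hM0) hK0) (mul_nonneg hK0 h1),
    mul_nonneg (mul_nonneg hB0 hM0) hK0,
    mul_nonneg hL.le h2, mul_nonneg (mul_nonneg hL.le h2) hK0]
end
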